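/- Fix t>0, r>0 and (x₀,y₀)∈ℝ². Let (λₙ) and (cₙ) be sequences of positive reals with λₙ→∞ and cₙ²/λₙ→1 (the Kac condition). Then the radial densities fₙ(r) = (λₙ/(2πcₙ)) r e^{−λₙt} ∫₀^{2π} e^{(λₙ/cₙ)√(Aₙ(θ))}/√(Aₙ(θ)) dθ, where Aₙ(θ) = cₙ²t² − r² − x₀² − y₀² + 2r(x₀cosθ + y₀sinθ), converge as n→∞ to (r/(2πt)) ∫₀^{2π} exp(−(r²+x₀²+y₀²−2r(x₀cosθ+y₀sinθ))/(2t)) dθ, i.e. to the density (r/t) e^{−r²/(2t)} e^{−(x₀²+y₀²)/(2t)} I₀(r√(x₀²+y₀²)/t) of the two-dimensional Bessel process, where I₀ denotes the modified Bessel function given by I₀(x√(α²+β²)) = (1/2π)∫₀^{2π} e^{x(αcosθ+βsinθ)} dθ. -/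
import Mathlib

open MeasureTheory Real Filter

private lemma kac_flight_eq (r t l cn K : ℝ) (ht : 0 < t)
    (hl : 0 < l) (hcn : 0 < cn) (hK : 0 ≤ K) (hA : K < cn ^ 2 * t ^ 2) :
    l / (2 * π * cn) * r * Real.exp (-l * t) *
      (Real.exp (l / cn * Real.sqrt (cn ^ 2 * t ^ 2 - K)) / Real.sqrt (cn ^ 2 * t ^ 2 - K))
    = r / (2 * π) * (l / cn ^ 2 / Real.sqrt (t ^ 2 - K / cn ^ 2)) *
        Real.exp (-(l / cn ^ 2 * (K / (Real.sqrt (t ^ 2 - K / cn ^ 2) + t)))) := by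
  have hπ : (0:ℝ) < π := Real.pi_pos
  have hcn2 : (0:ℝ) < cn ^ 2 := by positivity
  have hs : 0 < t ^ 2 - K / cn ^ 2 := by
    rw [sub_pos, div_lt_iff₀ hcn2]; nlinarith
  have hfac : cn ^ 2 * t ^ 2 - K = cn ^ 2 * (t ^ 2 - K / cn ^ 2) := by
    field_simp
  have hsqrt : Real.sqrt (cn ^ 2 * t ^ 2 - K)
      = cn * Real.sqrt (t ^ 2 - K / cn ^ 2) := by
    rw [hfac, Real.sqrt_mul (by positivity), Real.sqrt_sq hcn.le]
  set s := t ^ 2 - K / cn ^ 2 with hs_def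
  have hss : 0 < Real.sqrt s := Real.sqrt_pos.2 hs
  have hsq : Real.sqrt s ^ 2 = s := Real.sq_sqrt hs.le
  have hst : 0 < Real.sqrt s + t := by positivity
  have h1 : Real.sqrt s - t = -(K / cn ^ 2) / (Real.sqrt s + t) := by
    rw [eq_div_iff hst.ne']
    linear_combination hsq + hs_def
  have hexpo : l / cn * (cn * Real.sqrt s) + -l * t
      = -(l / cn ^ 2 * (K / (Real.sqrt s + t))) := by
    have h2 : l / cn * (cn * Real.sqrt s) = l * Real.sqrt s := by
      field_simp
    rw [h2]
    have : l * Real.sqrt s + -l * t = l * (Real.sqrt s - t) := by ring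
    rw [this, h1]
    field_simp
  calc l / (2 * π * cn) * r * Real.exp (-l * t) *
        (Real.exp (l / cn * Real.sqrt (cn ^ 2 * t ^ 2 - K)) / Real.sqrt (cn ^ 2 * t ^ 2 - K))
      = l / (2 * π * cn) * r / (cn * Real.sqrt s) *
        (Real.exp (l / cn * (cn * Real.sqrt s)) * Real.exp (-l * t)) := by
        rw [hsqrt]; ring
    _ = l / (2 * π * cn) * r / (cn * Real.sqrt s) *
        Real.exp (l / cn * (cn * Real.sqrt s) + -l * t) := by
        rw [Real.exp_add]
    _ = r / (2 * π) * (l / cn ^ 2 / Real.sqrt s) *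
        Real.exp (-(l / cn ^ 2 * (K / (Real.sqrt s + t)))) := by
        rw [hexpo]; field_simp

/-- Theorem 2.1, second part: under the Kac condition (`λₙ → ∞`, `cₙ²/λₙ → 1`)
the radial densities of the planar random flight converge to the density of the
two-dimensional Bessel process (written via the integral representation of the
modified Bessel function `I₀`). -/
theorem planar_random_flight_kac_limit
    (t r x₀ y₀ : ℝ) (ht : 0 < t) (hr : 0 < r)
    (lam c : ℕ → ℝ) (hlam : ∀ n, 0 < lam n) (hc : ∀ n, 0 < c n)
    (hlamtop : Tendsto lam atTop atTop)
    (hkac : Tendsto (fun n => (c n) ^ 2 / lam n) atTop (nhds 1)) :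
    Tendsto
      (fun n => lam n / (2 * π * c n) * r * Real.exp (-(lam n) * t) *
        ∫ θ in (0:ℝ)..(2 * π),
          Real.exp (lam n / c n *
              Real.sqrt ((c n) ^ 2 * t ^ 2 - r ^ 2 - x₀ ^ 2 - y₀ ^ 2 +
                2 * r * (x₀ * Real.cos θ + y₀ * Real.sin θ))) /
            Real.sqrt ((c n) ^ 2 * t ^ 2 - r ^ 2 - x₀ ^ 2 - y₀ ^ 2 +
                2 * r * (x₀ * Real.cos θ + y₀ * Real.sin θ)))
      atTop
      (nhds (r / (2 * π * t) *
        ∫ θ in (0:ℝ)..(2 * π),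
          Real.exp (-(r ^ 2 + x₀ ^ 2 + y₀ ^ 2 -
              2 * r * (x₀ * Real.cos θ + y₀ * Real.sin θ)) / (2 * t)))) := by
  have hπ : (0:ℝ) < π := Real.pi_pos
  -- the "distance squared" function and its bounds
  have hK0 : ∀ θ : ℝ, 0 ≤ r ^ 2 + x₀ ^ 2 + y₀ ^ 2 -
      2 * r * (x₀ * Real.cos θ + y₀ * Real.sin θ) := by
    intro θ
    nlinarith [Real.sin_sq_add_cos_sq θ, sq_nonneg (r * Real.cos θ - x₀),
      sq_nonneg (r * Real.sin θ - y₀)]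
  set M : ℝ := r ^ 2 + x₀ ^ 2 + y₀ ^ 2 + 2 * r * (|x₀| + |y₀|) with hM
  have hM0 : 0 < M := by
    have : 0 ≤ 2 * r * (|x₀| + |y₀|) := by positivity
    nlinarith
  have hKM : ∀ θ : ℝ, r ^ 2 + x₀ ^ 2 + y₀ ^ 2 -
      2 * r * (x₀ * Real.cos θ + y₀ * Real.sin θ) ≤ M := by
    intro θ
    have hu : -|x₀| ≤ x₀ * Real.cos θ := by
      have h1 : |x₀ * Real.cos θ| ≤ |x₀| := by
        rw [abs_mul]
        exact mul_le_of_le_one_right (abs_nonneg _) (Real.abs_cos_le_one θ)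
      have := neg_abs_le (x₀ * Real.cos θ)
      linarith
    have hv : -|y₀| ≤ y₀ * Real.sin θ := by
      have h1 : |y₀ * Real.sin θ| ≤ |y₀| := by
        rw [abs_mul]
        exact mul_le_of_le_one_right (abs_nonneg _) (Real.abs_sin_le_one θ)
      have := neg_abs_le (y₀ * Real.sin θ)
      linarith
    have := hr.le
    nlinarith
  -- c n ^ 2 → ∞
  have hc2top : Tendsto (fun n => (c n) ^ 2) atTop atTop := by
    have heq : (fun n => (c n) ^ 2) = fun n => (c n) ^ 2 / lam n * lam n := by
      funext n; rw [div_mul_cancel₀ _ (hlam n).ne']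
    rw [heq]
    exact Tendsto.pos_mul_atTop one_pos hkac hlamtop
  -- lam n / c n ^ 2 → 1
  have ha : Tendsto (fun n => lam n / (c n) ^ 2) atTop (nhds 1) := by
    have h := hkac.inv₀ one_ne_zero
    simp only [inv_one] at h
    refine h.congr fun n => ?_
    rw [inv_div]
  -- eventual bounds
  have hev1 : ∀ᶠ n in atTop, 2 * M ≤ (c n) ^ 2 * t ^ 2 :=
    (hc2top.atTop_mul_const (by positivity : (0:ℝ) < t ^ 2)).eventually_ge_atTop (2 * M)
  have hev2 : ∀ᶠ n in atTop, lam n / (c n) ^ 2 ≤ 2 :=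
    ha.eventually (eventually_le_nhds (by norm_num))
  -- rewrite goal as a single integral
  simp only [← intervalIntegral.integral_const_mul]
  -- dominated convergence
  apply intervalIntegral.tendsto_integral_filter_of_dominated_convergence
    (bound := fun _ => r / (2 * π) * (2 / Real.sqrt (t ^ 2 / 2)))
  · -- measurability
    filter_upwards [hev1] with n h1
    have hApos : ∀ θ : ℝ, 0 < (c n) ^ 2 * t ^ 2 - r ^ 2 - x₀ ^ 2 - y₀ ^ 2 +
        2 * r * (x₀ * Real.cos θ + y₀ * Real.sin θ) := by
      intro θ
      have := hKM θ
      nlinarith [hM0]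
    have hAc : Continuous fun θ : ℝ => (c n) ^ 2 * t ^ 2 - r ^ 2 - x₀ ^ 2 - y₀ ^ 2 +
        2 * r * (x₀ * Real.cos θ + y₀ * Real.sin θ) := by continuity
    have hcont : Continuous fun θ : ℝ =>
        lam n / (2 * π * c n) * r * Real.exp (-lam n * t) *
        (Real.exp (lam n / c n * Real.sqrt ((c n) ^ 2 * t ^ 2 - r ^ 2 - x₀ ^ 2 - y₀ ^ 2 +
            2 * r * (x₀ * Real.cos θ + y₀ * Real.sin θ))) /
          Real.sqrt ((c n) ^ 2 * t ^ 2 - r ^ 2 - x₀ ^ 2 - y₀ ^ 2 +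
            2 * r * (x₀ * Real.cos θ + y₀ * Real.sin θ))) := by
      apply continuous_const.mul
      apply Continuous.div
      · exact Real.continuous_exp.comp (continuous_const.mul (Real.continuous_sqrt.comp hAc))
      · exact Real.continuous_sqrt.comp hAc
      · intro θ
        exact (Real.sqrt_pos.2 (hApos θ)).ne'
    exact hcont.aestronglyMeasurable
  · -- bound
    filter_upwards [hev1, hev2] with n h1 h2
    filter_upwards with θ _
    have hKθ := hK0 θ
    have hKMθ := hKM θ
    have hcn2 : (0:ℝ) < (c n) ^ 2 := pow_pos (hc n) 2
    have hAlt : r ^ 2 + x₀ ^ 2 + y₀ ^ 2 - 2 * r * (x₀ * Real.cos θ + y₀ * Real.sin θ)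
        < (c n) ^ 2 * t ^ 2 := by nlinarith
    have harg : (c n) ^ 2 * t ^ 2 - r ^ 2 - x₀ ^ 2 - y₀ ^ 2 +
        2 * r * (x₀ * Real.cos θ + y₀ * Real.sin θ)
        = (c n) ^ 2 * t ^ 2 - (r ^ 2 + x₀ ^ 2 + y₀ ^ 2 -
          2 * r * (x₀ * Real.cos θ + y₀ * Real.sin θ)) := by ring
    rw [harg, kac_flight_eq r t (lam n) (c n) _ ht (hlam n) (hc n) hKθ hAlt]
    set K := r ^ 2 + x₀ ^ 2 + y₀ ^ 2 - 2 * r * (x₀ * Real.cos θ + y₀ * Real.sin θ)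
    have hq2 : K / (c n) ^ 2 ≤ t ^ 2 / 2 := by
      rw [div_le_iff₀ hcn2]; nlinarith
    have hs : 0 < t ^ 2 - K / (c n) ^ 2 := by nlinarith [div_nonneg hKθ hcn2.le]
    have hs2 : t ^ 2 / 2 ≤ t ^ 2 - K / (c n) ^ 2 := by linarith
    have hss : 0 < Real.sqrt (t ^ 2 - K / (c n) ^ 2) := Real.sqrt_pos.2 hs
    have hexple : Real.exp (-(lam n / (c n) ^ 2 *
        (K / (Real.sqrt (t ^ 2 - K / (c n) ^ 2) + t)))) ≤ 1 := by
      apply Real.exp_le_one_iff.2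
      apply neg_nonpos.2
      exact mul_nonneg (div_nonneg (hlam n).le hcn2.le)
        (div_nonneg hKθ (by positivity))
    have hfrac : lam n / (c n) ^ 2 / Real.sqrt (t ^ 2 - K / (c n) ^ 2)
        ≤ 2 / Real.sqrt (t ^ 2 / 2) := by
      exact div_le_div₀ (by norm_num) h2
        (Real.sqrt_pos.2 (div_pos (pow_pos ht 2) two_pos)) (Real.sqrt_le_sqrt hs2)
    have hnn : 0 ≤ r / (2 * π) * (lam n / (c n) ^ 2 / Real.sqrt (t ^ 2 - K / (c n) ^ 2)) *
        Real.exp (-(lam n / (c n) ^ 2 * (K / (Real.sqrt (t ^ 2 - K / (c n) ^ 2) + t)))) := by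
      have h0 : (0:ℝ) ≤ lam n / (c n) ^ 2 / Real.sqrt (t ^ 2 - K / (c n) ^ 2) :=
        div_nonneg (div_nonneg (hlam n).le hcn2.le) hss.le
      positivity
    rw [Real.norm_eq_abs, abs_of_nonneg hnn]
    calc r / (2 * π) * (lam n / (c n) ^ 2 / Real.sqrt (t ^ 2 - K / (c n) ^ 2)) *
          Real.exp (-(lam n / (c n) ^ 2 * (K / (Real.sqrt (t ^ 2 - K / (c n) ^ 2) + t))))
        ≤ r / (2 * π) * (2 / Real.sqrt (t ^ 2 / 2)) * 1 := by
          have hr2π : (0:ℝ) ≤ r / (2 * π) := by positivity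
          have he0 : (0:ℝ) ≤ Real.exp (-(lam n / (c n) ^ 2 *
              (K / (Real.sqrt (t ^ 2 - K / (c n) ^ 2) + t)))) := (Real.exp_pos _).le
          have hfr0 : (0:ℝ) ≤ 2 / Real.sqrt (t ^ 2 / 2) := by positivity
          apply mul_le_mul (mul_le_mul le_rfl hfrac
            (div_nonneg (div_nonneg (hlam n).le hcn2.le) hss.le) hr2π) hexple he0
          exact mul_nonneg hr2π hfr0
      _ = r / (2 * π) * (2 / Real.sqrt (t ^ 2 / 2)) := mul_one _
  · exact intervalIntegrable_const
  · -- pointwise limit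
    filter_upwards with θ _
    have hKθ := hK0 θ
    have hKMθ := hKM θ
    set K := r ^ 2 + x₀ ^ 2 + y₀ ^ 2 - 2 * r * (x₀ * Real.cos θ + y₀ * Real.sin θ) with hKdef
    have hq0 : Tendsto (fun n => K / (c n) ^ 2) atTop (nhds 0) := by
      have h := tendsto_const_nhds (x := K) (f := atTop (α := ℕ)) |>.mul
        hc2top.inv_tendsto_atTop
      simpa [div_eq_mul_inv] using h
    have hsn : Tendsto (fun n => Real.sqrt (t ^ 2 - K / (c n) ^ 2)) atTop (nhds t) := by
      have h := (tendsto_const_nhds (x := t ^ 2) (f := atTop (α := ℕ)) |>.sub hq0).sqrt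
      simpa [Real.sqrt_sq ht.le] using h
    have hfr : Tendsto (fun n => lam n / (c n) ^ 2 / Real.sqrt (t ^ 2 - K / (c n) ^ 2))
        atTop (nhds (1 / t)) := ha.div hsn ht.ne'
    have hex : Tendsto (fun n => Real.exp (-(lam n / (c n) ^ 2 *
        (K / (Real.sqrt (t ^ 2 - K / (c n) ^ 2) + t))))) atTop
        (nhds (Real.exp (-(1 * (K / (t + t)))))) := by
      apply (Real.continuous_exp.tendsto _).comp
      exact (ha.mul (tendsto_const_nhds.div (hsn.add tendsto_const_nhds)
        (by positivity : (0:ℝ) < t + t).ne')).neg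
    have htot : Tendsto (fun n => r / (2 * π) *
        (lam n / (c n) ^ 2 / Real.sqrt (t ^ 2 - K / (c n) ^ 2)) *
        Real.exp (-(lam n / (c n) ^ 2 * (K / (Real.sqrt (t ^ 2 - K / (c n) ^ 2) + t)))))
        atTop (nhds (r / (2 * π) * (1 / t) * Real.exp (-(1 * (K / (t + t)))))) :=
      (tendsto_const_nhds.mul hfr).mul hex
    have hval : r / (2 * π) * (1 / t) * Real.exp (-(1 * (K / (t + t))))
        = r / (2 * π * t) * Real.exp (-K / (2 * t)) := by
      rw [show -(1 * (K / (t + t))) = -K / (2 * t) by ring, div_mul_div_comm, mul_one]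
    rw [← hval]
    apply htot.congr'
    filter_upwards [hev1] with n h1
    have hcn2 : (0:ℝ) < (c n) ^ 2 := pow_pos (hc n) 2
    have hAlt : K < (c n) ^ 2 * t ^ 2 := by linarith [hKMθ, hM0, h1]
    have harg : (c n) ^ 2 * t ^ 2 - r ^ 2 - x₀ ^ 2 - y₀ ^ 2 +
        2 * r * (x₀ * Real.cos θ + y₀ * Real.sin θ)
        = (c n) ^ 2 * t ^ 2 - K := by rw [hKdef]; ring
    rw [harg]
    exact (kac_flight_eq r t (lam n) (c n) K ht (hlam n) (hc n) hKθ hAlt).symm
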